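/- arXiv:1411.5016 — 4 statements merged into one kernel-verified Lean document; each statement's English description precedes it below -/
import Mathlib

section
/- Let n ≥ 1, let v : ℝⁿ → ℝⁿ be a continuous vector field, and let p ∈ ℝⁿ be a point with v(p) ≠ 0. Then there exist ε > 0 and A > 0 such that every periodic solution x of v of period T > 0 with x(0) in the closed ball of radius ε around p satisfies T ≥ A. (Quantitative flow-box lemma: near a non-singular point of a continuous vector field, periods of periodic orbits passing nearby are bounded below by a positive constant.) -/
open Metric Set
open scoped RealInnerProductSpace

/-- Quantitative flow-box lemma: near a non-singular point of a continuous
vector field on `ℝⁿ`, the periods of periodic orbits passing nearby are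
bounded from below by a positive constant. -/
theorem flow_box_period_lower_bound
    (n : ℕ) (hn : 1 ≤ n)
    (v : EuclideanSpace ℝ (Fin n) → EuclideanSpace ℝ (Fin n))
    (hv : Continuous v)
    (p : EuclideanSpace ℝ (Fin n)) (hp : v p ≠ 0) :
    ∃ ε > (0 : ℝ), ∃ A > (0 : ℝ),
      ∀ (x : ℝ → EuclideanSpace ℝ (Fin n)) (T : ℝ),
        0 < T →
        (∀ t, HasDerivAt x (v (x t)) t) →
        (∀ t, x (t + T) = x t) →
        x 0 ∈ Metric.closedBall p ε →
        A ≤ T := by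
  set c : ℝ := ‖v p‖ with hc
  have hc0 : 0 < c := norm_pos_iff.2 hp
  -- continuity of v at p
  obtain ⟨δ, hδ0, hδ⟩ := Metric.continuousAt_iff.1 hv.continuousAt (c / 2) (by positivity)
  set δ' : ℝ := δ / 2 with hδ'
  have hδ'0 : 0 < δ' := by positivity
  have hnear : ∀ q, dist q p ≤ δ' → ‖v q - v p‖ ≤ c / 2 := by
    intro q hq
    have : dist q p < δ := by simp only [hδ'] at hq; linarith
    have := hδ this
    rw [dist_eq_norm] at this
    linarith
  set M : ℝ := 3 * c / 2 with hM
  have hM0 : 0 < M := by positivity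
  have hMnorm : ∀ q, dist q p ≤ δ' → ‖v q‖ ≤ M := by
    intro q hq
    have h1 := hnear q hq
    calc ‖v q‖ = ‖v p + (v q - v p)‖ := by congr 1; abel
      _ ≤ ‖v p‖ + ‖v q - v p‖ := norm_add_le _ _
      _ ≤ c + c / 2 := by rw [← hc]; linarith
      _ = M := by rw [hM]; ring
  have hinner : ∀ q, dist q p ≤ δ' → c ^ 2 / 2 ≤ ⟪v p, v q⟫ := by
    intro q hq
    have h1 := hnear q hq
    have h2 : ⟪v p, v q⟫ = ⟪v p, v p⟫ + ⟪v p, v q - v p⟫ := by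
      rw [inner_sub_right]; ring
    have h3 : |⟪v p, v q - v p⟫| ≤ ‖v p‖ * ‖v q - v p‖ := abs_real_inner_le_norm _ _
    have h4 : ‖v p‖ * ‖v q - v p‖ ≤ c * (c / 2) := by
      apply mul_le_mul le_rfl h1 (norm_nonneg _) (le_of_lt hc0)
    have h5 : ⟪v p, v p⟫ = c ^ 2 := by
      rw [real_inner_self_eq_norm_sq, hc]
    have h6 : -(c * (c/2)) ≤ ⟪v p, v q - v p⟫ := by
      have := neg_abs_le ⟪v p, v q - v p⟫; linarith
    rw [h2, h5]; nlinarith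
  refine ⟨δ' / 3, by positivity, δ' / 3 / M, by positivity, ?_⟩
  intro x T hT hx hper hx0
  set ε : ℝ := δ' / 3 with hε
  have hε0 : 0 < ε := by positivity
  have hxc : Continuous x := continuous_iff_continuousAt.2 fun t => (hx t).continuousAt
  rw [Metric.mem_closedBall] at hx0
  by_contra hTA
  push_neg at hTA
  have hMT : M * T < ε := by
    have := (lt_div_iff₀ hM0).1 hTA
    nlinarith
  set D : Set ℝ := {t | t ∈ Icc (0:ℝ) T ∧ δ' ≤ dist (x t) p} with hD
  have hDclosed : IsClosed D := by
    apply IsClosed.inter isClosed_Icc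
    exact isClosed_le continuous_const ((hxc.dist continuous_const))
  rcases D.eq_empty_or_nonempty with hDe | hDne
  · -- orbit stays in the ball; inner product with v p strictly increases, contradiction
    have hin : ∀ t ∈ Icc (0:ℝ) T, dist (x t) p ≤ δ' := by
      intro t ht
      by_contra h
      push_neg at h
      have hm : t ∈ D := ⟨ht, le_of_lt h⟩
      rw [hDe] at hm
      exact hm
    have hderiv : ∀ t, HasDerivAt (fun s => ⟪v p, x s⟫) ⟪v p, v (x t)⟫ t := by
      intro t
      have := (hasDerivAt_const t (v p)).inner ℝ (hx t)
      simpa using this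
    obtain ⟨t₀, ht₀, hslope⟩ := exists_hasDerivAt_eq_slope (fun s => ⟪v p, x s⟫)
      (fun s => ⟪v p, v (x s)⟫) hT
      (Continuous.continuousOn (continuous_const.inner hxc))
      (fun s _ => hderiv s)
    have hxT : x T = x 0 := by have := hper 0; rwa [zero_add] at this
    rw [hxT] at hslope
    simp only [sub_self, zero_div] at hslope
    have ht₀' : dist (x t₀) p ≤ δ' := hin t₀ ⟨le_of_lt ht₀.1, le_of_lt ht₀.2⟩
    have := hinner (x t₀) ht₀'
    rw [hslope] at this
    nlinarith
  · -- orbit leaves the ball: too fast for small T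
    have hbdd : BddBelow D := ⟨0, fun t ht => ht.1.1⟩
    set t₁ : ℝ := sInf D with ht₁
    have ht₁D : t₁ ∈ D := hDclosed.csInf_mem hDne hbdd
    obtain ⟨⟨ht₁0, ht₁T⟩, ht₁d⟩ := ht₁D
    have ht₁pos : 0 < t₁ := by
      rcases lt_or_eq_of_le ht₁0 with h | h
      · exact h
      · exfalso; rw [← h] at ht₁d; simp only [hε] at hx0; linarith
    have hstay : ∀ s ∈ Icc (0:ℝ) t₁, dist (x s) p ≤ δ' := by
      have hK : IsClosed {s : ℝ | dist (x s) p ≤ δ'} :=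
        isClosed_le (hxc.dist continuous_const) continuous_const
      have hIco : Ico (0:ℝ) t₁ ⊆ {s : ℝ | dist (x s) p ≤ δ'} := by
        intro s hs
        by_contra h
        simp only [Set.mem_setOf_eq, not_le] at h
        have hsD : s ∈ D := ⟨⟨hs.1, le_trans (le_of_lt hs.2) ht₁T⟩, le_of_lt h⟩
        exact absurd (csInf_le hbdd hsD) (not_le.2 hs.2)
      intro s hs
      have : s ∈ closure (Ico (0:ℝ) t₁) := by
        rw [closure_Ico (ne_of_lt ht₁pos)]; exact hs
      exact hK.closure_subset ((closure_mono hIco) this)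
    have hlip : ‖x t₁ - x 0‖ ≤ M * ‖t₁ - 0‖ := by
      apply (convex_Icc (0:ℝ) t₁).norm_image_sub_le_of_norm_hasDerivWithin_le
        (f' := fun s => v (x s))
        (fun s _ => (hx s).hasDerivWithinAt)
        (fun s hs => hMnorm (x s) (hstay s hs))
        (left_mem_Icc.2 (le_of_lt ht₁pos)) (right_mem_Icc.2 (le_of_lt ht₁pos))
    rw [sub_zero, Real.norm_eq_abs, abs_of_pos ht₁pos] at hlip
    have hd : dist (x t₁) p ≤ ‖x t₁ - x 0‖ + dist (x 0) p := by
      have := dist_triangle (x t₁) (x 0) p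
      rwa [dist_eq_norm (x t₁) (x 0)] at this
    have hMt₁ : M * t₁ ≤ M * T := by nlinarith
    simp only [hε] at hx0
    have : δ' ≤ M * T + δ' / 3 := by linarith
    simp only [hε] at hMT
    linarith
end

section
/- Let n ≥ 1, let v : ℝⁿ → ℝⁿ be a continuous vector field, and let K ⊆ ℝⁿ be a compact set on which v is nowhere vanishing, i.e. v(q) ≠ 0 for all q ∈ K. Then there exists A > 0 such that every periodic solution x of v of period T > 0 whose image is contained in K satisfies T ≥ A. (All periods of periodic orbits contained in a compact set free of rest points of v are bounded below by a positive constant.) -/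
/-- All periods of periodic orbits of a continuous vector field contained in a
compact set free of rest points are bounded from below by a positive
constant. -/
theorem period_lower_bound_on_compact
    (n : ℕ) (hn : 1 ≤ n)
    (v : EuclideanSpace ℝ (Fin n) → EuclideanSpace ℝ (Fin n))
    (hv : Continuous v)
    (K : Set (EuclideanSpace ℝ (Fin n))) (hK : IsCompact K)
    (hvK : ∀ q ∈ K, v q ≠ 0) :
    ∃ A > (0 : ℝ),
      ∀ (x : ℝ → EuclideanSpace ℝ (Fin n)) (T : ℝ),
        0 < T →
        (∀ t, HasDerivAt x (v (x t)) t) →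
        (∀ t, x (t + T) = x t) →
        Set.range x ⊆ K →
        A ≤ T := by
  rcases K.eq_empty_or_nonempty with rfl | hne
  · exact ⟨1, one_pos, fun x T _ _ _ hr =>
      absurd (hr ⟨0, rfl⟩) (Set.notMem_empty _)⟩
  obtain ⟨qm, hqmK, hqm⟩ := hK.exists_isMinOn hne hv.norm.continuousOn
  obtain ⟨qM, hqMK, hqM⟩ := hK.exists_isMaxOn hne hv.norm.continuousOn
  set m := ‖v qm‖ with hm_def
  set M := ‖v qM‖ with hM_def
  have hm : 0 < m := norm_pos_iff.mpr (hvK qm hqmK)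
  have hM : 0 < M := lt_of_lt_of_le hm (hqm hqMK)
  have hucont := hK.uniformContinuousOn_of_continuous hv.continuousOn
  rw [Metric.uniformContinuousOn_iff] at hucont
  obtain ⟨δ, hδ, hδ'⟩ := hucont (m / 2) (by positivity)
  refine ⟨δ / (2 * M), by positivity, fun x T hT hx hper hr => ?_⟩
  by_contra hTA
  push_neg at hTA
  have hxK : ∀ t, x t ∈ K := fun t => hr ⟨t, rfl⟩
  have hxc : Continuous x := (Differentiable.continuous (fun t => (hx t).differentiableAt))
  have hvc : Continuous fun t => v (x t) := hv.comp hxc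
  -- Lipschitz bound: ‖x t - x 0‖ ≤ M * |t|
  have hlip : ∀ t : ℝ, ‖x t - x 0‖ ≤ M * ‖t - (0:ℝ)‖ := by
    intro t
    refine convex_univ.norm_image_sub_le_of_norm_hasDerivWithin_le
      (fun s _ => (hx s).hasDerivWithinAt) (fun s _ => hqM (hxK s))
      (Set.mem_univ 0) (Set.mem_univ t)
  -- points of the orbit on [0, T] stay δ-close to x 0
  have hclose : ∀ t ∈ Set.Icc (0:ℝ) T, dist (x t) (x 0) < δ := by
    intro t ht
    rw [dist_eq_norm]
    calc ‖x t - x 0‖ ≤ M * ‖t - (0:ℝ)‖ := hlip t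
      _ = M * |t| := by rw [sub_zero, Real.norm_eq_abs]
      _ ≤ M * T := by
          apply mul_le_mul_of_nonneg_left _ hM.le
          rw [abs_of_nonneg ht.1]; exact ht.2
      _ < M * (δ / (2 * M)) := by
          exact mul_lt_mul_of_pos_left hTA hM
      _ = δ / 2 := by field_simp
      _ < δ := by linarith
  -- pointwise lower bound on the inner product
  have hinner : ∀ t ∈ Set.Icc (0:ℝ) T,
      m ^ 2 / 2 ≤ inner ℝ (v (x 0)) (v (x t)) := by
    intro t ht
    have h1 : ‖v (x t) - v (x 0)‖ ≤ m / 2 := by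
      have := hδ' (x t) (hxK t) (x 0) (hxK 0) (hclose t ht)
      rw [dist_eq_norm] at this
      linarith
    have h2 : m ≤ ‖v (x 0)‖ := hqm (hxK 0)
    have h3 : |(inner ℝ (v (x 0)) (v (x t) - v (x 0)) : ℝ)|
        ≤ ‖v (x 0)‖ * ‖v (x t) - v (x 0)‖ := abs_real_inner_le_norm _ _
    have h4 : (inner ℝ (v (x 0)) (v (x t)) : ℝ)
        = ‖v (x 0)‖ ^ 2 + inner ℝ (v (x 0)) (v (x t) - v (x 0)) := by
      rw [inner_sub_right, real_inner_self_eq_norm_sq]; ring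
    have h5 : (inner ℝ (v (x 0)) (v (x t) - v (x 0)) : ℝ)
        ≥ -(‖v (x 0)‖ * ‖v (x t) - v (x 0)‖) := neg_le_of_abs_le h3
    have h6 : ‖v (x t) - v (x 0)‖ ≥ 0 := norm_nonneg _
    nlinarith [sq_nonneg (‖v (x 0)‖ - m)]
  -- the displacement over one period is zero
  have hint : (∫ t in (0:ℝ)..T, v (x t)) = 0 := by
    rw [intervalIntegral.integral_eq_sub_of_hasDerivAt (fun t _ => hx t)
      (hvc.intervalIntegrable 0 T)]
    have := hper 0
    rw [zero_add] at this
    rw [this, sub_self]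
  have hint2 : (∫ t in (0:ℝ)..T, (inner ℝ (v (x 0)) (v (x t)) : ℝ)) = 0 := by
    have := (innerSL ℝ (v (x 0))).intervalIntegral_comp_comm
      (μ := MeasureTheory.volume) (hvc.intervalIntegrable 0 T)
    simp only [innerSL_apply_apply] at this
    rw [this, hint, inner_zero_right]
  -- but the integral is at least T * m^2/2 > 0
  have hmono : T * (m ^ 2 / 2)
      ≤ ∫ t in (0:ℝ)..T, (inner ℝ (v (x 0)) (v (x t)) : ℝ) := by
    have hconst : (∫ _ in (0:ℝ)..T, (m ^ 2 / 2 : ℝ)) = T * (m ^ 2 / 2) := by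
      simp; ring
    rw [← hconst]
    apply intervalIntegral.integral_mono_on hT.le intervalIntegrable_const
      (((innerSL ℝ (v (x 0))).continuous.comp hvc).intervalIntegrable 0 T)
      hinner
  have : 0 < T * (m ^ 2 / 2) := by positivity
  linarith [hint2 ▸ hmono]
end

section
/- Let n ≥ 1, let v : ℝⁿ → ℝⁿ be a continuous vector field, and let K ⊆ ℝⁿ be a compact set on which v is nowhere vanishing. Then there exist ε > 0 and A > 0 such that for every continuous vector field w : ℝⁿ → ℝⁿ with ‖w(q) − v(q)‖ ≤ ε for all q ∈ K, every periodic solution x of w of period T > 0 whose image is contained in K satisfies T ≥ A. (The positive lower bound on periods of periodic orbits contained in K is stable under uniform C⁰-perturbation of the vector field; this is the paper's claim that the minimal periods A_k of the approximating Reeb vector fields R_k satisfy A_k > A/2 for k sufficiently large.) -/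
/-- The positive lower bound on periods of periodic orbits contained in a
compact set `K` free of rest points of `v` is stable under uniform
`C⁰`-perturbation of the vector field. -/
theorem period_lower_bound_stable_under_perturbation
    (n : ℕ) (hn : 1 ≤ n)
    (v : EuclideanSpace ℝ (Fin n) → EuclideanSpace ℝ (Fin n))
    (hv : Continuous v)
    (K : Set (EuclideanSpace ℝ (Fin n))) (hK : IsCompact K)
    (hvK : ∀ q ∈ K, v q ≠ 0) :
    ∃ ε > (0 : ℝ), ∃ A > (0 : ℝ),
      ∀ (w : EuclideanSpace ℝ (Fin n) → EuclideanSpace ℝ (Fin n)),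
        Continuous w →
        (∀ q ∈ K, ‖w q - v q‖ ≤ ε) →
        ∀ (x : ℝ → EuclideanSpace ℝ (Fin n)) (T : ℝ),
          0 < T →
          (∀ t, HasDerivAt x (w (x t)) t) →
          (∀ t, x (t + T) = x t) →
          Set.range x ⊆ K →
          A ≤ T := by
  rcases K.eq_empty_or_nonempty with hKe | hKne
  · refine ⟨1, one_pos, 1, one_pos, fun w _ _ x T _ _ _ hxK => ?_⟩
    exact absurd (hxK ⟨0, rfl⟩) (by simp [hKe])
  -- minimum of ‖v‖ on K
  obtain ⟨q₀, hq₀, hmin⟩ := hK.exists_isMinOn hKne (hv.norm.continuousOn)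
  set c : ℝ := ‖v q₀‖ with hc_def
  have hc : 0 < c := norm_pos_iff.mpr (hvK q₀ hq₀)
  have hcK : ∀ q ∈ K, c ≤ ‖v q‖ := fun q hq => hmin hq
  -- upper bound of ‖v‖ on K
  obtain ⟨M₀, hM₀⟩ := hK.exists_bound_of_continuousOn hv.continuousOn
  have hM₀pos : 0 < M₀ := lt_of_lt_of_le hc (hM₀ q₀ hq₀)
  -- uniform continuity of v on K
  have huc := hK.uniformContinuousOn_of_continuous hv.continuousOn
  rw [Metric.uniformContinuousOn_iff] at huc
  obtain ⟨δ, hδ, hδ'⟩ := huc (c / 4) (by positivity)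
  set M : ℝ := M₀ + c / 4 with hM_def
  have hM : 0 < M := by positivity
  refine ⟨c / 4, by positivity, δ / (2 * M), by positivity, ?_⟩
  intro w hw hwv x T hT hx hxT hxK
  by_contra hA
  push_neg at hA
  have hxK' : ∀ t, x t ∈ K := fun t => hxK ⟨t, rfl⟩
  -- speed bound
  have hspeed : ∀ t : ℝ, ‖w (x t)‖ ≤ M := by
    intro t
    calc ‖w (x t)‖ = ‖v (x t) + (w (x t) - v (x t))‖ := by congr 1; abel
      _ ≤ ‖v (x t)‖ + ‖w (x t) - v (x t)‖ := norm_add_le _ _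
      _ ≤ M₀ + c / 4 := add_le_add (hM₀ _ (hxK' t)) (hwv _ (hxK' t))
  -- the orbit stays close to x 0 on [0, T]
  have hdist : ∀ t ∈ Set.Icc (0 : ℝ) T, ‖x t - x 0‖ ≤ M * (t - 0) :=
    norm_image_sub_le_of_norm_deriv_le_segment'
      (fun t _ => (hx t).hasDerivWithinAt) (fun t _ => hspeed t)
  have hclose : ∀ t ∈ Set.Icc (0 : ℝ) T, dist (x t) (x 0) < δ := by
    intro t ht
    have h1 : ‖x t - x 0‖ ≤ M * t := by simpa using hdist t ht
    have h2 : M * t ≤ M * T := by nlinarith [ht.2]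
    have h3 : M * T < δ / 2 := by
      have := (mul_lt_mul_iff_right₀ hM).mpr hA
      calc M * T < M * (δ / (2 * M)) := this
        _ = δ / 2 := by field_simp
    rw [dist_eq_norm]
    calc ‖x t - x 0‖ ≤ M * t := h1
      _ ≤ M * T := h2
      _ < δ / 2 := h3
      _ < δ := by linarith
  -- the derivative of t ↦ ⟪x t, v (x 0)⟫ is positive on [0, T]
  set u := v (x 0) with hu_def
  have hu_norm : c ≤ ‖u‖ := hcK _ (hxK' 0)
  have hgd : ∀ t : ℝ, HasDerivAt (fun s => (inner ℝ (x s) u : ℝ))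
      (inner ℝ (w (x t)) u) t := by
    intro t
    simpa using (hx t).inner ℝ (hasDerivAt_const t u)
  have hpos : ∀ t ∈ Set.Icc (0 : ℝ) T, (0 : ℝ) < inner ℝ (w (x t)) u := by
    intro t ht
    have h1 : (inner ℝ (w (x t)) u : ℝ)
        = inner ℝ u u + inner ℝ (v (x t) - u) u + inner ℝ (w (x t) - v (x t)) u := by
      simp only [← inner_add_left]
      congr 1
      abel
    have h2 : ‖v (x t) - u‖ ≤ c / 4 := by
      have := hδ' (x t) (hxK' t) (x 0) (hxK' 0) (hclose t ht)
      rw [dist_eq_norm] at this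
      exact le_of_lt this
    have h3 : ‖w (x t) - v (x t)‖ ≤ c / 4 := hwv _ (hxK' t)
    have e1 : (inner ℝ u u : ℝ) = ‖u‖ ^ 2 := by
      rw [real_inner_self_eq_norm_sq]
    have e2 : (inner ℝ (v (x t) - u) u : ℝ) ≥ -(c / 4 * ‖u‖) := by
      have := abs_real_inner_le_norm (v (x t) - u) u
      have hb : ‖v (x t) - u‖ * ‖u‖ ≤ c / 4 * ‖u‖ :=
        mul_le_mul_of_nonneg_right h2 (norm_nonneg _)
      nlinarith [abs_le.mp this]
    have e3 : (inner ℝ (w (x t) - v (x t)) u : ℝ) ≥ -(c / 4 * ‖u‖) := by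
      have := abs_real_inner_le_norm (w (x t) - v (x t)) u
      have hb : ‖w (x t) - v (x t)‖ * ‖u‖ ≤ c / 4 * ‖u‖ :=
        mul_le_mul_of_nonneg_right h3 (norm_nonneg _)
      nlinarith [abs_le.mp this]
    have : (inner ℝ (w (x t)) u : ℝ) ≥ ‖u‖ ^ 2 - c / 2 * ‖u‖ := by
      rw [h1, e1]; linarith
    nlinarith [hu_norm, hc]
  -- hence t ↦ ⟪x t, u⟫ is strictly increasing on [0, T]
  have hmono : StrictMonoOn (fun s => (inner ℝ (x s) u : ℝ)) (Set.Icc 0 T) := by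
    apply strictMonoOn_of_hasDerivWithinAt_pos (convex_Icc 0 T)
      (fun s _ => ((hgd s).continuousAt).continuousWithinAt)
      (fun s hs => ((hgd s).hasDerivWithinAt))
    intro s hs
    exact hpos s (interior_subset hs)
  have hlt : (inner ℝ (x 0) u : ℝ) < inner ℝ (x T) u :=
    hmono (Set.left_mem_Icc.mpr hT.le) (Set.right_mem_Icc.mpr hT.le) hT
  have hper : x T = x 0 := by simpa using hxT 0
  rw [hper] at hlt
  exact lt_irrefl _ hlt
end

section
/- Let n ≥ 1, let K ⊆ ℝⁿ be compact, and let v, v₁, v₂, … : ℝⁿ → ℝⁿ be continuous vector fields such that v_k → v uniformly on K and v is nowhere vanishing on K. Let c > 0, and suppose that for every k there exist N_k ≥ 1 and periodic solutions x_1^k, …, x_{N_k}^k of v_k of periods T_1^k, …, T_{N_k}^k, each with image contained in K, such that T_1^k + … + T_{N_k}^k ≤ c. Then there exist N ≥ 1 and periodic solutions x_1, …, x_N of v of periods T_1, …, T_N, each with image contained in K, such that T_1 + … + T_N ≤ c. (Finite families of periodic orbits with bounded total period persist in the limit: the number of components N_k is uniformly bounded because all periods are bounded below by a positive constant, and each component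 converges after reparametrization to a periodic orbit of the limit vector field; this is the Euclidean model of the limiting argument used to extend the main theorem from non-degenerate to arbitrary contact forms.) -/
open Set Filter Topology

lemma aux_dist_le_of_hasDerivAt {E : Type*} [NormedAddCommGroup E] [NormedSpace ℝ E]
    {f f' : ℝ → E} {C : ℝ} (hf : ∀ t, HasDerivAt f (f' t) t)
    (hC : ∀ t, ‖f' t‖ ≤ C) (a b : ℝ) : dist (f b) (f a) ≤ C * dist b a := by
  have h := Convex.norm_image_sub_le_of_norm_hasDerivWithin_le
    (f := f) (f' := f') (s := Set.univ)
    (fun t _ => (hf t).hasDerivWithinAt) (fun t _ => hC t) convex_univ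
    (Set.mem_univ a) (Set.mem_univ b)
  simpa [dist_eq_norm] using h

lemma aux_isCompact_S {E : Type*} [NormedAddCommGroup E] [NormedSpace ℝ E]
    {K : Set E} (hK : IsCompact K) (L : ℝ) (hL : 0 ≤ L) :
    IsCompact {f : C(Set.Icc (0:ℝ) 1, E) |
      (∀ p q, dist (f p) (f q) ≤ L * dist p q) ∧ ∀ s, f s ∈ K} := by
  apply ArzelaAscoli.isCompact_of_equicontinuous
  · have himg : ContinuousMap.toFun '' {f : C(Set.Icc (0:ℝ) 1, E) |
        (∀ p q, dist (f p) (f q) ≤ L * dist p q) ∧ ∀ s, f s ∈ K} =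
        {g : Set.Icc (0:ℝ) 1 → E |
          (∀ p q, dist (g p) (g q) ≤ L * dist p q) ∧ ∀ s, g s ∈ K} := by
      ext g
      constructor
      · rintro ⟨f, hf, rfl⟩; exact hf
      · rintro ⟨h1, h2⟩
        have hlip : LipschitzWith (Real.toNNReal L) g :=
          LipschitzWith.of_dist_le_mul fun p q => by
            simpa [Real.coe_toNNReal L hL] using h1 p q
        exact ⟨⟨g, hlip.continuous⟩, ⟨h1, h2⟩, rfl⟩
    rw [himg]
    refine IsCompact.of_isClosed_subset (isCompact_univ_pi fun _ => hK) ?_ ?_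
    · have h1 : IsClosed {g : Set.Icc (0:ℝ) 1 → E | ∀ p q, dist (g p) (g q) ≤ L * dist p q} := by
        have he : {g : Set.Icc (0:ℝ) 1 → E | ∀ p q, dist (g p) (g q) ≤ L * dist p q} =
            ⋂ (p) (q), {g | dist (g p) (g q) ≤ L * dist p q} := by
          ext g; simp only [Set.mem_setOf_eq, Set.mem_iInter]
        rw [he]
        exact isClosed_iInter fun p => isClosed_iInter fun q =>
          isClosed_le ((continuous_apply p).dist (continuous_apply q)) continuous_const
      have h2 : IsClosed {g : Set.Icc (0:ℝ) 1 → E | ∀ s, g s ∈ K} := by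
        have he : {g : Set.Icc (0:ℝ) 1 → E | ∀ s, g s ∈ K} =
            ⋂ s, (fun g : Set.Icc (0:ℝ) 1 → E => g s) ⁻¹' K := by
          ext g; simp only [Set.mem_setOf_eq, Set.mem_iInter, Set.mem_preimage]
        rw [he]
        exact isClosed_iInter fun s => hK.isClosed.preimage (continuous_apply s)
      rw [Set.setOf_and]
      exact h1.inter h2
    · intro g hg
      simp only [Set.mem_univ_pi]
      exact fun s => hg.2 s
  · apply Metric.equicontinuous_of_continuity_modulus (fun d => L * d)
    · have hcont : Continuous fun d : ℝ => L * d := continuous_const.mul continuous_id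
      simpa using hcont.tendsto 0
    · rintro p q ⟨f, hf⟩
      exact hf.1 p q

/-- Finite families of periodic orbits with bounded total period persist in
the limit: if `vₖ → v` uniformly on a compact set `K` free of rest points of
`v`, and each `vₖ` admits a finite family of periodic solutions in `K` whose
periods add up to at most `c`, then so does `v`. -/
theorem periodic_links_persist_in_limit
    (n : ℕ) (hn : 1 ≤ n)
    (K : Set (EuclideanSpace ℝ (Fin n))) (hK : IsCompact K)
    (v : EuclideanSpace ℝ (Fin n) → EuclideanSpace ℝ (Fin n))
    (vk : ℕ → EuclideanSpace ℝ (Fin n) → EuclideanSpace ℝ (Fin n))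
    (hv : Continuous v) (hvk : ∀ k, Continuous (vk k))
    (hconv : TendstoUniformlyOn vk v Filter.atTop K)
    (hvK : ∀ q ∈ K, v q ≠ 0)
    (c : ℝ) (hc : 0 < c)
    (hex : ∀ k, ∃ (N : ℕ), 1 ≤ N ∧
      ∃ (x : Fin N → ℝ → EuclideanSpace ℝ (Fin n)) (T : Fin N → ℝ),
        (∀ i, 0 < T i) ∧
        (∀ i t, HasDerivAt (x i) (vk k (x i t)) t) ∧
        (∀ i t, x i (t + T i) = x i t) ∧
        (∀ i, Set.range (x i) ⊆ K) ∧
        (∑ i, T i) ≤ c) :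
    ∃ (N : ℕ), 1 ≤ N ∧
      ∃ (x : Fin N → ℝ → EuclideanSpace ℝ (Fin n)) (T : Fin N → ℝ),
        (∀ i, 0 < T i) ∧
        (∀ i t, HasDerivAt (x i) (v (x i t)) t) ∧
        (∀ i t, x i (t + T i) = x i t) ∧
        (∀ i, Set.range (x i) ⊆ K) ∧
        (∑ i, T i) ≤ c := by
  classical
  -- extract one orbit per k
  have horb : ∀ k, ∃ (x : ℝ → EuclideanSpace ℝ (Fin n)) (T : ℝ), 0 < T ∧
      (∀ t, HasDerivAt x (vk k (x t)) t) ∧ (∀ t, x (t + T) = x t) ∧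
      Set.range x ⊆ K ∧ T ≤ c := by
    intro k
    obtain ⟨N, hN, x, T, hTpos, hder, hper, hran, hsum⟩ := hex k
    refine ⟨x ⟨0, hN⟩, T ⟨0, hN⟩, hTpos _, hder _, hper _, hran _, le_trans ?_ hsum⟩
    exact Finset.single_le_sum (fun i _ => (hTpos i).le) (Finset.mem_univ _)
  choose X τ hτpos hXder hXper hXran hτc using horb
  -- K is nonempty
  have hKne : K.Nonempty := ⟨X 0 0, hXran 0 (Set.mem_range_self 0)⟩
  -- lower bound δ for ‖v‖ on K
  obtain ⟨q₀, hq₀K, hq₀min⟩ := hK.exists_isMinOn hKne hv.norm.continuousOn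
  set δ := ‖v q₀‖ with hδdef
  have hδpos : 0 < δ := norm_pos_iff.mpr (hvK q₀ hq₀K)
  have hδle : ∀ q ∈ K, δ ≤ ‖v q‖ := fun q hq => hq₀min hq
  -- upper bound M for all speeds on K
  obtain ⟨q₁, hq₁K, hq₁max⟩ := hK.exists_isMaxOn hKne hv.norm.continuousOn
  set M := ‖v q₁‖ + 1 with hMdef
  have hMpos : 0 < M := by positivity
  have hvM : ∀ q ∈ K, ‖v q‖ ≤ M - 1 := by
    intro q hq
    simpa [hMdef] using hq₁max hq
  -- uniform convergence in metric form
  have huc : ∀ ε > 0, ∀ᶠ k in atTop, ∀ q ∈ K, dist (v q) (vk k q) < ε :=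
    Metric.tendstoUniformlyOn_iff.mp hconv
  -- uniform continuity of v on K
  obtain ⟨r, hrpos, hr⟩ := Metric.uniformContinuousOn_iff.mp
    (hK.uniformContinuousOn_of_continuous hv.continuousOn) (δ/4) (by positivity)
  -- pick k₀
  obtain ⟨k₀, hk₀⟩ := eventually_atTop.mp (huc (min 1 (δ/4)) (by positivity))
  -- speed bounds for k ≥ k₀
  have hvkM : ∀ k ≥ k₀, ∀ q ∈ K, ‖vk k q‖ ≤ M := by
    intro k hk q hq
    have h1 := hk₀ k hk q hq
    have h2 : dist (vk k q) (v q) < 1 := lt_of_lt_of_le (dist_comm (v q) (vk k q) ▸ h1) (min_le_left _ _)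
    calc ‖vk k q‖ ≤ ‖v q‖ + dist (vk k q) (v q) := by
          rw [dist_eq_norm]
          have := norm_sub_norm_le (vk k q) (v q)
          linarith [norm_sub_norm_le (vk k q) (v q)]
      _ ≤ (M - 1) + 1 := add_le_add (hvM q hq) h2.le
      _ = M := by ring
  -- Lipschitz bound for the X k, k ≥ k₀
  have hXlip : ∀ k ≥ k₀, ∀ a b, dist (X k b) (X k a) ≤ M * dist b a := by
    intro k hk a b
    exact aux_dist_le_of_hasDerivAt (hXder k)
      (fun t => hvkM k hk _ (hXran k (Set.mem_range_self t))) a b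
  -- period lower bound
  set T₀ := r / (2 * M) with hT₀def
  have hT₀pos : 0 < T₀ := by positivity
  have hTlow : ∀ k ≥ k₀, T₀ ≤ τ k := by
    intro k hk
    by_contra hlt
    push_neg at hlt
    have hXcont : Continuous (X k) := continuous_iff_continuousAt.2 fun t => (hXder k t).continuousAt
    have hint : IntervalIntegrable (fun t => vk k (X k t)) MeasureTheory.volume 0 (τ k) :=
      ((hvk k).comp hXcont).intervalIntegrable _ _
    have hFTC : ∫ t in (0:ℝ)..(τ k), vk k (X k t) = X k (τ k) - X k 0 :=
      intervalIntegral.integral_eq_sub_of_hasDerivAt (fun t _ => hXder k t) hint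
    have hper0 : X k (τ k) = X k 0 := by simpa using hXper k 0
    have hzero : ∫ t in (0:ℝ)..(τ k), vk k (X k t) = 0 := by rw [hFTC, hper0, sub_self]
    -- rewrite integrand
    have hconst : ∫ _t in (0:ℝ)..(τ k), v (X k 0) = (τ k) • v (X k 0) := by
      simp [intervalIntegral.integral_const]
    have hsub : ∫ t in (0:ℝ)..(τ k), (vk k (X k t) - v (X k 0)) = -((τ k) • v (X k 0)) := by
      rw [intervalIntegral.integral_sub hint (intervalIntegrable_const), hzero, hconst, zero_sub]
    -- bound the integrand on (0, τ k]
    have hbound : ∀ t ∈ Set.uIoc (0:ℝ) (τ k), ‖vk k (X k t) - v (X k 0)‖ ≤ δ/2 := by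
      intro t ht
      rw [Set.uIoc_of_le (hτpos k).le] at ht
      have htK : X k t ∈ K := hXran k (Set.mem_range_self t)
      have h0K : X k 0 ∈ K := hXran k (Set.mem_range_self 0)
      have hdistt : dist (X k t) (X k 0) < r := by
        have habs : dist t (0:ℝ) ≤ τ k := by
          rw [Real.dist_eq, sub_zero, abs_of_pos ht.1]
          exact ht.2
        have hMτ : M * τ k < r / 2 := by
          rw [hT₀def] at hlt
          calc M * τ k < M * (r / (2*M)) := mul_lt_mul_of_pos_left hlt hMpos
            _ = r / 2 := by field_simp
        calc dist (X k t) (X k 0) ≤ M * dist t 0 := hXlip k hk 0 t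
          _ ≤ M * τ k := mul_le_mul_of_nonneg_left habs hMpos.le
          _ < r / 2 := hMτ
          _ < r := by linarith
      calc ‖vk k (X k t) - v (X k 0)‖
          ≤ ‖vk k (X k t) - v (X k t)‖ + ‖v (X k t) - v (X k 0)‖ := norm_sub_le_norm_sub_add_norm_sub _ _ _
        _ ≤ δ/4 + δ/4 := by
            have h1 : dist (v (X k t)) (vk k (X k t)) < min 1 (δ/4) := hk₀ k hk _ htK
            have h2 : dist (v (X k t)) (v (X k 0)) < δ/4 := hr _ htK _ h0K hdistt
            have h1' : ‖vk k (X k t) - v (X k t)‖ ≤ δ/4 :=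
              le_trans (le_of_lt (by rwa [dist_comm, dist_eq_norm] at h1 )) (min_le_right 1 (δ/4))
            rw [← dist_eq_norm]
            exact add_le_add (le_trans (le_of_eq rfl) (by
              have := lt_of_lt_of_le h1 (min_le_right 1 (δ/4))
              rw [dist_comm, dist_eq_norm] at this
              exact this.le)) h2.le
        _ = δ/2 := by ring
    have hnormle : ‖∫ t in (0:ℝ)..(τ k), (vk k (X k t) - v (X k 0))‖ ≤ δ/2 * |τ k - 0| :=
      intervalIntegral.norm_integral_le_of_norm_le_const hbound
    rw [hsub, norm_neg, norm_smul, Real.norm_eq_abs, abs_of_pos (hτpos k), sub_zero,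
      abs_of_pos (hτpos k)] at hnormle
    have hδX : δ ≤ ‖v (X k 0)‖ := hδle _ (hXran k (Set.mem_range_self 0))
    nlinarith [hτpos k]
  -- reparametrized solutions, shifted by k₀
  set L := c * M with hLdef
  have hLpos : 0 < L := mul_pos hc hMpos
  set Y : ℕ → ℝ → EuclideanSpace ℝ (Fin n) :=
    fun k s => X (k₀ + k) (τ (k₀ + k) * s) with hYdef
  have hkge : ∀ k : ℕ, k₀ + k ≥ k₀ := fun k => Nat.le_add_right k₀ k
  have hYder : ∀ k s, HasDerivAt (Y k) (τ (k₀ + k) • vk (k₀ + k) (Y k s)) s := by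
    intro k s
    have h1 : HasDerivAt (fun s : ℝ => τ (k₀ + k) * s) (τ (k₀ + k)) s := by
      simpa using (hasDerivAt_id s).const_mul (τ (k₀ + k))
    have h2 := HasDerivAt.scomp s (hXder (k₀ + k) (τ (k₀ + k) * s)) h1
    exact h2
  have hYK : ∀ k s, Y k s ∈ K := fun k s => hXran _ (Set.mem_range_self _)
  have hYper : ∀ k s, Y k (s + 1) = Y k s := by
    intro k s
    show X (k₀ + k) (τ (k₀ + k) * (s + 1)) = X (k₀ + k) (τ (k₀ + k) * s)
    rw [mul_add, mul_one]
    exact hXper _ _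
  have hYspeed : ∀ k s, ‖τ (k₀ + k) • vk (k₀ + k) (Y k s)‖ ≤ L := by
    intro k s
    rw [norm_smul, Real.norm_eq_abs, abs_of_pos (hτpos _)]
    exact mul_le_mul (hτc _) (hvkM _ (hkge k) _ (hYK k s)) (norm_nonneg _) hc.le
  have hYlip : ∀ k a b, dist (Y k b) (Y k a) ≤ L * dist b a :=
    fun k a b => aux_dist_le_of_hasDerivAt (hYder k) (hYspeed k) a b
  have hYcont : ∀ k, Continuous (Y k) :=
    fun k => continuous_iff_continuousAt.2 fun s => (hYder k s).continuousAt
  -- Arzela-Ascoli setup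
  set S : Set C(Set.Icc (0:ℝ) 1, EuclideanSpace ℝ (Fin n)) :=
    {f | (∀ p q, dist (f p) (f q) ≤ L * dist p q) ∧ ∀ s, f s ∈ K} with hSdef
  have hScomp : IsCompact S := aux_isCompact_S hK L hLpos.le
  set F : ℕ → C(Set.Icc (0:ℝ) 1, EuclideanSpace ℝ (Fin n)) :=
    fun k => ⟨fun s => Y k s, (hYcont k).comp continuous_subtype_val⟩ with hFdef
  have hFS : ∀ k, F k ∈ S := by
    intro k
    refine ⟨fun p q => ?_, fun s => hYK k s⟩
    exact hYlip k q p
  have hprod : IsCompact ((Set.Icc T₀ c) ×ˢ S) := isCompact_Icc.prod hScomp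
  have hmem : ∀ k, ((τ (k₀ + k), F k) : ℝ × C(Set.Icc (0:ℝ) 1, EuclideanSpace ℝ (Fin n)))
      ∈ (Set.Icc T₀ c) ×ˢ S :=
    fun k => Set.mk_mem_prod ⟨hTlow _ (hkge k), hτc _⟩ (hFS k)
  obtain ⟨⟨T, G⟩, hTG, φ, hφmono, hφlim⟩ := hprod.tendsto_subseq hmem
  have hTmem : T ∈ Set.Icc T₀ c := (Set.mem_prod.mp hTG).1
  have hGS : G ∈ S := (Set.mem_prod.mp hTG).2
  have hTlim : Tendsto (fun k => τ (k₀ + φ k)) atTop (𝓝 T) :=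
    (continuous_fst.tendsto (T, G)).comp hφlim
  have hGlim : Tendsto (fun k => F (φ k)) atTop (𝓝 G) :=
    (continuous_snd.tendsto (T, G)).comp hφlim
  have hGunif : TendstoUniformly (fun k s => F (φ k) s) (fun s => G s) atTop :=
    ContinuousMap.tendsto_iff_tendstoUniformly.mp hGlim
  -- the limit curve
  have hfr : ∀ s : ℝ, Int.fract s ∈ Set.Icc (0:ℝ) 1 :=
    fun s => ⟨Int.fract_nonneg s, (Int.fract_lt_one s).le⟩
  set y : ℝ → EuclideanSpace ℝ (Fin n) := fun s => G ⟨Int.fract s, hfr s⟩ with hydef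
  have hYfr : ∀ k s, Y k (Int.fract s) = Y k s := by
    intro k s
    have hper : Function.Periodic (Y k) 1 := hYper k
    have h := hper.sub_int_mul_eq (x := s) ⌊s⌋
    rw [mul_one, Int.self_sub_floor] at h
    exact h
  have hZunif : TendstoUniformly (fun k s => Y (φ k) s) y atTop := by
    rw [Metric.tendstoUniformly_iff]
    intro ε hε
    filter_upwards [Metric.tendstoUniformly_iff.mp hGunif ε hε] with k hk s
    have h1 := hk ⟨Int.fract s, hfr s⟩
    have h2 : dist (y s) (Y (φ k) s)
        = dist (G ⟨Int.fract s, hfr s⟩) (F (φ k) ⟨Int.fract s, hfr s⟩) := by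
      rw [← hYfr (φ k) s]
      rfl
    calc dist (y s) (Y (φ k) s) = _ := h2
      _ < ε := h1
  have hycont : Continuous y :=
    hZunif.continuous (Filter.Eventually.of_forall fun k => hYcont (φ k)).frequently
  have hyK : ∀ s, y s ∈ K := fun s => hGS.2 _
  have hyper : ∀ s, y (s + 1) = y s := by
    intro s
    show G ⟨Int.fract (s + 1), hfr _⟩ = G ⟨Int.fract s, hfr s⟩
    congr 1
    exact Subtype.ext (Int.fract_add_one s)
  -- the limit vector field along y
  have hT0T : 0 < T := lt_of_lt_of_le hT₀pos hTmem.1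
  set g : ℝ → EuclideanSpace ℝ (Fin n) := fun u => T • v (y u) with hgdef
  have hgcont : Continuous g := (hv.comp hycont).const_smul T
  have hψ : Tendsto (fun k => k₀ + φ k) atTop atTop :=
    tendsto_atTop_mono (fun k => le_trans hφmono.le_apply (Nat.le_add_left _ _)) tendsto_id
  have hvMle : ∀ q ∈ K, ‖v q‖ ≤ M := fun q hq => le_trans (hvM q hq) (by linarith)
  have huconv : ∀ ε > 0, ∀ᶠ k in atTop, ∀ u : ℝ,
      dist (g u) (τ (k₀ + φ k) • vk (k₀ + φ k) (Y (φ k) u)) ≤ ε := by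
    intro ε hε
    obtain ⟨r', hr'pos, hr'⟩ := Metric.uniformContinuousOn_iff.mp
      (hK.uniformContinuousOn_of_continuous hv.continuousOn) (ε/4/c) (by positivity)
    have h1 : ∀ᶠ k in atTop, |τ (k₀ + φ k) - T| < ε/4/M := by
      filter_upwards [Metric.tendsto_nhds.mp hTlim (ε/4/M) (by positivity)] with k hk
      rwa [Real.dist_eq] at hk
    have h2 : ∀ᶠ k in atTop, ∀ u : ℝ, dist (y u) (Y (φ k) u) < r' :=
      Metric.tendstoUniformly_iff.mp hZunif r' hr'pos
    have h3 : ∀ᶠ k in atTop, ∀ q ∈ K, dist (v q) (vk (k₀ + φ k) q) < ε/4/c :=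
      hψ.eventually (huc (ε/4/c) (by positivity))
    filter_upwards [h1, h2, h3] with k hk1 hk2 hk3 u
    have hapos := hτpos (k₀ + φ k)
    have hac := hτc (k₀ + φ k)
    have hu1 : dist (T • v (y u)) (τ (k₀ + φ k) • v (y u)) ≤ ε/4 := by
      rw [dist_eq_norm, ← sub_smul, norm_smul, Real.norm_eq_abs]
      calc |T - τ (k₀ + φ k)| * ‖v (y u)‖ ≤ (ε/4/M) * M := by
            apply mul_le_mul _ (hvMle _ (hyK u)) (norm_nonneg _) (by positivity)
            rw [abs_sub_comm]
            exact hk1.le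
        _ = ε/4 := by field_simp
    have hu2 : dist (τ (k₀ + φ k) • v (y u)) (τ (k₀ + φ k) • v (Y (φ k) u)) ≤ ε/4 := by
      have hd := hr' _ (hyK u) _ (hYK (φ k) u) (hk2 u)
      rw [dist_smul₀]
      calc ‖τ (k₀ + φ k)‖ * dist (v (y u)) (v (Y (φ k) u)) ≤ c * (ε/4/c) := by
            apply mul_le_mul _ hd.le dist_nonneg hc.le
            rw [Real.norm_eq_abs, abs_of_pos hapos]
            exact hac
        _ = ε/4 := by field_simp
    have hu3 : dist (τ (k₀ + φ k) • v (Y (φ k) u))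
        (τ (k₀ + φ k) • vk (k₀ + φ k) (Y (φ k) u)) ≤ ε/4 := by
      have hd := hk3 _ (hYK (φ k) u)
      rw [dist_smul₀]
      calc ‖τ (k₀ + φ k)‖ * dist (v (Y (φ k) u)) (vk (k₀ + φ k) (Y (φ k) u)) ≤ c * (ε/4/c) := by
            apply mul_le_mul _ hd.le dist_nonneg hc.le
            rw [Real.norm_eq_abs, abs_of_pos hapos]
            exact hac
        _ = ε/4 := by field_simp
    calc dist (g u) (τ (k₀ + φ k) • vk (k₀ + φ k) (Y (φ k) u))
        ≤ dist (g u) (τ (k₀ + φ k) • v (y u))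
          + dist (τ (k₀ + φ k) • v (y u)) (τ (k₀ + φ k) • v (Y (φ k) u))
          + dist (τ (k₀ + φ k) • v (Y (φ k) u))
            (τ (k₀ + φ k) • vk (k₀ + φ k) (Y (φ k) u)) := dist_triangle4 _ _ _ _
      _ ≤ ε/4 + ε/4 + ε/4 := add_le_add (add_le_add hu1 hu2) hu3
      _ ≤ ε := by linarith
  -- integral equation for the approximants
  have hZint : ∀ k s, Y (φ k) s
      = Y (φ k) 0 + ∫ u in (0:ℝ)..s, τ (k₀ + φ k) • vk (k₀ + φ k) (Y (φ k) u) := by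
    intro k s
    have hcont : Continuous fun u => τ (k₀ + φ k) • vk (k₀ + φ k) (Y (φ k) u) :=
      ((hvk (k₀ + φ k)).comp (hYcont (φ k))).const_smul (τ (k₀ + φ k))
    have hFTC := intervalIntegral.integral_eq_sub_of_hasDerivAt
      (f := Y (φ k)) (fun u _ => hYder (φ k) u) (hcont.intervalIntegrable 0 s)
    rw [hFTC]
    abel
  -- integral equation for the limit
  have hyint : ∀ s, y s = y 0 + ∫ u in (0:ℝ)..s, g u := by
    intro s
    have hAk : Tendsto (fun k => ∫ u in (0:ℝ)..s, τ (k₀ + φ k) • vk (k₀ + φ k) (Y (φ k) u))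
        atTop (𝓝 (∫ u in (0:ℝ)..s, g u)) := by
      rw [Metric.tendsto_nhds]
      intro ε hε
      have hε' : 0 < ε / (|s| + 1) := by positivity
      filter_upwards [huconv (ε / (|s| + 1)) hε'] with k hk
      have hfint : IntervalIntegrable (fun u => τ (k₀ + φ k) • vk (k₀ + φ k) (Y (φ k) u))
          MeasureTheory.volume 0 s :=
        (((hvk (k₀ + φ k)).comp (hYcont (φ k))).const_smul (τ (k₀ + φ k))).intervalIntegrable 0 s
      have hgint : IntervalIntegrable g MeasureTheory.volume 0 s :=
        hgcont.intervalIntegrable 0 s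
      rw [dist_eq_norm, ← intervalIntegral.integral_sub hfint hgint]
      have hb := intervalIntegral.norm_integral_le_of_norm_le_const
        (C := ε / (|s| + 1)) (a := (0:ℝ)) (b := s)
        (f := fun u => τ (k₀ + φ k) • vk (k₀ + φ k) (Y (φ k) u) - g u)
        (fun u _ => by
          rw [← dist_eq_norm, dist_comm]
          exact hk u)
      calc ‖∫ u in (0:ℝ)..s, (τ (k₀ + φ k) • vk (k₀ + φ k) (Y (φ k) u) - g u)‖
          ≤ ε / (|s| + 1) * |s - 0| := hb
        _ < ε := by
            rw [sub_zero]
            have : ε / (|s| + 1) * |s| < ε / (|s| + 1) * (|s| + 1) :=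
              mul_lt_mul_of_pos_left (by linarith) hε'
            calc ε / (|s| + 1) * |s| < ε / (|s| + 1) * (|s| + 1) := this
              _ = ε := by field_simp
    have h1 : Tendsto (fun k => Y (φ k) s) atTop (𝓝 (y 0 + ∫ u in (0:ℝ)..s, g u)) := by
      have he : (fun k => Y (φ k) s)
          = fun k => Y (φ k) 0 + ∫ u in (0:ℝ)..s, τ (k₀ + φ k) • vk (k₀ + φ k) (Y (φ k) u) :=
        funext fun k => hZint k s
      rw [he]
      exact (hZunif.tendsto_at 0).add hAk
    exact tendsto_nhds_unique (hZunif.tendsto_at s) h1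
  -- y solves the limit ODE
  have hyder : ∀ s, HasDerivAt y (g s) s := by
    intro s
    have hG : HasDerivAt (fun u => y 0 + ∫ t in (0:ℝ)..u, g t) (g s) s :=
      ((hgcont.integral_hasStrictDerivAt 0 s).hasDerivAt).const_add (y 0)
    have hyy : ∀ u, y u = y 0 + ∫ t in (0:ℝ)..u, g t := hyint
    have : y = fun u => y 0 + ∫ t in (0:ℝ)..u, g t := funext hyint
    rw [this]
    exact hG
  -- assemble the answer
  refine ⟨1, le_refl 1, (fun _ t => y (t / T)), (fun _ => T), fun _ => hT0T, ?_, ?_, ?_, ?_⟩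
  · intro i t
    have h1 : HasDerivAt (fun t : ℝ => t / T) (1 / T) t := (hasDerivAt_id t).div_const T
    have h2 := HasDerivAt.scomp t (hyder (t / T)) h1
    have h2' : HasDerivAt (fun u : ℝ => y (u / T)) ((1 / T) • g (t / T)) t := by
      exact h2
    have h4 : (1 / T) • g (t / T) = v (y (t / T)) := by
      rw [hgdef]
      simp only []
      rw [smul_smul, one_div_mul_cancel hT0T.ne', one_smul]
    rw [h4] at h2'
    exact h2'
  · intro i t
    show y ((t + T) / T) = y (t / T)
    have he : (t + T) / T = t / T + 1 := by field_simp
    rw [he, hyper]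
  · intro i
    rintro q ⟨t, rfl⟩
    exact hyK _
  · simpa using hTmem.2
end
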